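/- Let G be a subfilter of a filter F in an MR-algebra such that G ∨ (G→F) = F (G is F-Boolean). Then (G→F)→F = G (G is weakly F-Boolean). -/

import Mathlib

namespace CubicPaper

/-- Existence of the binary meet of `a` and `b`. -/
def MeetExists {L : Type*} [SemilatticeSup L] (a b : L) : Prop :=
  ∃ m : L, IsGLB ({a, b} : Set L) m

/-- A cubic algebra: join semilattice with top `⊤` and a (totalized) binary
operation `delta`, whose axioms are only assumed where the paper defines them. -/
structure CubicAlgebra (L : Type*) [SemilatticeSup L] [OrderTop L] where
  delta : L → L → L
  op : L → L → L
  op_def : ∀ x y : L, op x y = delta ⊤ (delta (x ⊔ y) y) ⊔ y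
  ax_a : ∀ x y : L, x ≤ y → delta y x ⊔ x = y
  ax_b : ∀ x y z : L, x ≤ y → y ≤ z →
    delta z (delta y x) = delta (delta z y) (delta z x)
  ax_c : ∀ x y : L, x ≤ y → delta y (delta y x) = x
  ax_d : ∀ x y z : L, x ≤ y → y ≤ z → delta z x ≤ delta z y
  ax_e : ∀ x y : L, op (op x y) y = x ⊔ y
  ax_f : ∀ x y z : L, op x (op y z) = op y (op x z)

namespace CubicAlgebra

variable {L : Type*} [SemilatticeSup L] [OrderTop L]

/-- `a ≼ b` iff `Δ(a ⊔ b, a) ≤ b`. -/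
def preceq (C : CubicAlgebra L) (a b : L) : Prop := C.delta (a ⊔ b) a ≤ b

/-- `a ≃ b` iff `Δ(a ⊔ b, a) = b`. -/
def csim (C : CubicAlgebra L) (a b : L) : Prop := C.delta (a ⊔ b) a = b

/-- The MR axiom: for `a, b < x`, `Δ(x,a) ⊔ b < x` iff `a ⊓ b` does not exist. -/
def IsMR (C : CubicAlgebra L) : Prop :=
  ∀ a b x : L, a < x → b < x → (C.delta x a ⊔ b < x ↔ ¬ MeetExists a b)

/-- A filter: nonempty, upward closed, closed under existing binary meets. -/
def CFilter (F : Set L) : Prop :=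
  F.Nonempty ∧ (∀ a b : L, a ∈ F → a ≤ b → b ∈ F) ∧
    (∀ a b m : L, a ∈ F → b ∈ F → IsGLB ({a, b} : Set L) m → m ∈ F)

/-- The filter generated by a set: intersection of all filters containing it. -/
def filterGen (S : Set L) : Set L := ⋂₀ {T : Set L | CFilter T ∧ S ⊆ T}

/-- The subalgebra generated by a filter `F`: `{Δ(x,y) : y ≤ x, x,y ∈ F}`. -/
def gen (C : CubicAlgebra L) (F : Set L) : Set L :=
  {z : L | ∃ x ∈ F, ∃ y ∈ F, y ≤ x ∧ z = C.delta x y}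

/-- `F_g = {Δ(g ⊔ f, f) : f ∈ F}`. -/
def shift (C : CubicAlgebra L) (F : Set L) (g : L) : Set L :=
  {z : L | ∃ f ∈ F, z = C.delta (g ⊔ f) f}

/-- For filters `A ⊆ B`, `A → B = {x ∈ B : ∀ a ∈ A, x ⊔ a = ⊤}`. -/
def arrow (A B : Set L) : Set L := {x : L | x ∈ B ∧ ∀ a ∈ A, x ⊔ a = ⊤}

/-- `Δ(G, F) = Δ(𝟏, G→F) ∨ G`, as a generated filter. -/
def deltaF (C : CubicAlgebra L) (G F : Set L) : Set L :=
  filterGen ((C.delta ⊤ '' arrow G F) ∪ G)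

/-- `G` is `F`-Boolean iff `G ∨ (G→F) = F`. -/
def FBoolean (F G : Set L) : Prop :=
  filterGen (G ∪ arrow G F) = F

end CubicAlgebra

end CubicPaper

/-!
The operation `op` satisfies the axioms of an implication algebra (axioms e and f), so every
interval `[a, ⊤]` is a Boolean lattice with complement `x ↦ op x a`. Distributivity there shows
that an existing meet `m = z₁ ⊓ z₂` yields `w = (w ⊔ z₁) ⊓ (w ⊔ z₂)` for every `w ≥ m`. Hence
the set of those `z` all of whose upper bounds `w` with `w ⊔ (G→F) = ⊤` lie in `G` is a filter.
It contains `G` and `G→F`, hence `G ∨ (G→F) = F`, and this gives `(G→F)→F ⊆ G`.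
-/

namespace CubicPaper

namespace CubicAlgebra

section Implication

variable {L : Type*} [SemilatticeSup L] [OrderTop L] (C : CubicAlgebra L)

lemma delta_le {x y : L} (h : y ≤ x) : C.delta x y ≤ x :=
  le_sup_left.trans (C.ax_a y x h).le

lemma delta_self (x : L) : C.delta x x = x := by
  refine le_antisymm (C.delta_le le_rfl) ?_
  calc x = C.delta x (C.delta x x) := (C.ax_c x x le_rfl).symm
    _ = C.delta (C.delta x x) (C.delta x x) := C.ax_b x x x le_rfl le_rfl
    _ ≤ C.delta x x := C.delta_le le_rfl

lemma le_op (x y : L) : y ≤ C.op x y := by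
  rw [C.op_def]
  exact le_sup_right

lemma op_eq_top_of_le {x y : L} (h : x ≤ y) : C.op x y = ⊤ := by
  rw [C.op_def, sup_eq_right.mpr h, delta_self]
  exact C.ax_a y ⊤ le_top

lemma top_op (y : L) : C.op ⊤ y = y := by
  rw [C.op_def, top_sup_eq, C.ax_c y ⊤ le_top, sup_idem]

lemma op_eq_top_iff {x y : L} : C.op x y = ⊤ ↔ x ≤ y := by
  refine ⟨fun h => ?_, C.op_eq_top_of_le⟩
  have e := C.ax_e x y
  rw [h, top_op] at e
  exact le_sup_left.trans e.symm.le

lemma op_op_of_le {a x : L} (h : a ≤ x) : C.op (C.op x a) a = x := by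
  rw [C.ax_e, sup_eq_left.mpr h]

lemma op_sup_self (x y : L) : C.op x y ⊔ x = ⊤ := by
  have hle : C.delta (x ⊔ y) y ≤ x ⊔ y := C.delta_le le_sup_right
  rw [C.op_def]
  refine top_unique ((C.ax_a _ ⊤ le_top).ge.trans
    (sup_le (le_sup_left.trans le_sup_left) (hle.trans ?_)))
  exact sup_le le_sup_right (le_sup_right.trans le_sup_left)

lemma op_le_op_right {x y : L} (h : x ≤ y) (z : L) : C.op y z ≤ C.op x z := by
  rw [← op_eq_top_iff, C.ax_f, C.ax_e]
  exact C.op_eq_top_of_le (h.trans le_sup_left)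

lemma op_le_op_left {y z : L} (h : y ≤ z) (x : L) : C.op x y ≤ C.op x z := by
  have e : C.op (C.op x y) z = C.op (C.op z y) (x ⊔ y) := by
    conv_lhs => rw [← C.op_op_of_le h]
    rw [C.ax_f (C.op x y), C.ax_e]
  rw [← op_eq_top_iff, C.ax_f, e]
  exact C.op_eq_top_of_le (le_sup_left.trans (C.le_op _ _))

lemma le_op_comm {x y z : L} : x ≤ C.op y z ↔ y ≤ C.op x z := by
  rw [← op_eq_top_iff, ← op_eq_top_iff, C.ax_f]

/-- The meet of `x` and `y` in the Boolean interval `[a, ⊤]`, written through the complement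
`x ↦ op x a` by De Morgan. -/
def relInf (a x y : L) : L := C.op (C.op x a ⊔ C.op y a) a

lemma le_relInf_self (a x y : L) : a ≤ C.relInf a x y := C.le_op _ _

lemma relInf_le_left {a x : L} (hx : a ≤ x) (y : L) : C.relInf a x y ≤ x :=
  (C.op_le_op_right le_sup_left a).trans_eq (C.op_op_of_le hx)

lemma relInf_le_right {a y : L} (x : L) (hy : a ≤ y) : C.relInf a x y ≤ y :=
  (C.op_le_op_right le_sup_right a).trans_eq (C.op_op_of_le hy)

lemma le_relInf {a u x y : L} (hu : a ≤ u) (hx : u ≤ x) (hy : u ≤ y) :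
    u ≤ C.relInf a x y :=
  (C.op_op_of_le hu).ge.trans
    (C.op_le_op_right (sup_le (C.op_le_op_right hx a) (C.op_le_op_right hy a)) a)

lemma le_of_op_sup_eq_top {a g z : L} (hz : a ≤ z) (h : C.op g a ⊔ z = ⊤) : g ≤ z :=
  (le_op_comm C).mp (C.op_le_op_left hz g) |>.trans
    ((C.op_eq_top_iff).mp ((C.ax_e _ _).trans h))

lemma relInf_sup_op_le {a z c : L} (hz : a ≤ z) (hc : a ≤ c) :
    C.relInf a (z ⊔ c) (C.op z a) ≤ c := by
  refine C.le_of_op_sup_eq_top hc ?_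
  have ha : a ≤ C.op (z ⊔ c) a ⊔ C.op (C.op z a) a := (C.le_op _ _).trans le_sup_left
  rw [relInf, C.op_op_of_le ha, C.op_op_of_le hz, sup_assoc]
  exact C.op_sup_self (z ⊔ c) a

/-- Distributivity of `[a, ⊤]`, in the form `(z ⊔ c) ⊓ (z ⊔ d) ≤ z` when `c ⊓ d = a`. -/
lemma relInf_sup_sup_le {a z c d : L} (hz : a ≤ z) (hc : a ≤ c) (hd : a ≤ d)
    (hcd : C.relInf a c d = a) : C.relInf a (z ⊔ c) (z ⊔ d) ≤ z := by
  -- `w = g ⊓ ¬z` lies below `c` and `d`, so `w = a`, i.e. `¬g ⊔ z = ⊤`.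
  set g := C.relInf a (z ⊔ c) (z ⊔ d)
  have hag : a ≤ g := C.le_relInf_self _ _ _
  set w := C.relInf a g (C.op z a)
  have haw : a ≤ w := C.le_relInf_self _ _ _
  have hwz : w ≤ C.op z a := C.relInf_le_right g (C.le_op z a)
  have hw_le {e : L} (he : a ≤ e) (hge : g ≤ z ⊔ e) : w ≤ e :=
    (C.le_relInf haw ((C.relInf_le_left hag _).trans hge) hwz).trans
      (C.relInf_sup_op_le hz he)
  have hwa : w = a := le_antisymm
    ((C.le_relInf haw (hw_le hc (C.relInf_le_left (hz.trans le_sup_left) _))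
      (hw_le hd (C.relInf_le_right _ (hz.trans le_sup_left)))).trans_eq hcd) haw
  have ha_sup : a ≤ C.op g a ⊔ z := (C.le_op g a).trans le_sup_left
  have hwa' : C.op (C.op g a ⊔ z) a = a := by
    simpa only [w, relInf, C.op_op_of_le hz] using hwa
  refine C.le_of_op_sup_eq_top hz ?_
  rw [← C.op_op_of_le ha_sup, hwa']
  exact C.op_eq_top_of_le le_rfl

include C in
lemma isGLB_sup_pair {m w z₁ z₂ : L} (hmw : m ≤ w) (hm : IsGLB ({z₁, z₂} : Set L) m) :
    IsGLB ({w ⊔ z₁, w ⊔ z₂} : Set L) w := by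
  have hmz₁ : m ≤ z₁ := hm.1 (Set.mem_insert _ _)
  have hmz₂ : m ≤ z₂ := hm.1 (Set.mem_insert_of_mem _ rfl)
  have hrel : C.relInf m z₁ z₂ = m := by
    refine le_antisymm (hm.2 ?_) (C.le_relInf_self _ _ _)
    rintro t (rfl | rfl)
    exacts [C.relInf_le_left hmz₁ _, C.relInf_le_right _ hmz₂]
  refine ⟨?_, fun u hu => ?_⟩
  · rintro t (rfl | rfl) <;> exact le_sup_left
  · have hu₁ : u ≤ w ⊔ z₁ := hu (Set.mem_insert _ _)
    have hu₂ : u ≤ w ⊔ z₂ := hu (Set.mem_insert_of_mem _ rfl)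
    have huw : u ⊔ w ≤ C.relInf m (w ⊔ z₁) (w ⊔ z₂) :=
      C.le_relInf (hmw.trans le_sup_right) (sup_le hu₁ le_sup_left) (sup_le hu₂ le_sup_left)
    exact le_sup_left.trans (huw.trans (C.relInf_sup_sup_le hmw hmz₁ hmz₂ hrel))

end Implication

lemma filterGen_subset {L : Type*} [SemilatticeSup L] {S T : Set L} (hT : CFilter T)
    (hST : S ⊆ T) : filterGen S ⊆ T :=
  fun _ hx => Set.mem_sInter.mp hx T ⟨hT, hST⟩

section Filters

variable {L : Type*} [SemilatticeSup L] [OrderTop L]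

lemma CFilter.top_mem {G : Set L} (hG : CFilter G) : ⊤ ∈ G :=
  let ⟨_, hg⟩ := hG.1
  hG.2.1 _ ⊤ hg le_top

def arrowClosure (G H : Set L) : Set L :=
  {z | ∀ w, z ≤ w → (∀ h ∈ H, w ⊔ h = ⊤) → w ∈ G}

lemma cFilter_arrowClosure (C : CubicAlgebra L) {G : Set L} (hG : CFilter G) (H : Set L) :
    CFilter (arrowClosure G H) := by
  refine ⟨⟨⊤, fun w hw _ => top_unique hw ▸ hG.top_mem⟩,
    fun p q hp hpq w hw hH => hp w (hpq.trans hw) hH, fun p q m hp hq hm w hw hH => ?_⟩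
  have hsup {r : L} (hr : r ∈ arrowClosure G H) : w ⊔ r ∈ G :=
    hr _ le_sup_right fun h hh => by rw [sup_right_comm, hH h hh, top_sup_eq]
  exact hG.2.2 _ _ w (hsup hp) (hsup hq) (C.isGLB_sup_pair hw hm)

lemma subset_arrowClosure_left {G : Set L} (hG : CFilter G) (H : Set L) :
    G ⊆ arrowClosure G H :=
  fun _ hg _ hw _ => hG.2.1 _ _ hg hw

lemma subset_arrowClosure_right {G : Set L} (hG : CFilter G) (H : Set L) :
    H ⊆ arrowClosure G H := by
  intro h hh w hw hH
  have hw_top := hH h hh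
  rw [sup_eq_left.mpr hw] at hw_top
  exact hw_top ▸ hG.top_mem

lemma arrow_subset_of_subset_filterGen (C : CubicAlgebra L) {F G H : Set L} (hG : CFilter G)
    (hF : F ⊆ filterGen (G ∪ H)) : arrow H F ⊆ G := by
  have hFcl : F ⊆ arrowClosure G H := hF.trans <| filterGen_subset (cFilter_arrowClosure C hG H)
    (Set.union_subset (subset_arrowClosure_left hG H) (subset_arrowClosure_right hG H))
  exact fun x ⟨hxF, hxH⟩ => hFcl hxF x le_rfl hxH

lemma subset_arrow_arrow {F G : Set L} (hGF : G ⊆ F) : G ⊆ arrow (arrow G F) F :=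
  fun _ hx => ⟨hGF hx, fun _ ⟨_, hh⟩ => by rw [sup_comm]; exact hh _ hx⟩

end Filters

end CubicAlgebra

open CubicAlgebra

theorem stmt17_general {L : Type*} [SemilatticeSup L] [OrderTop L] (C : CubicAlgebra L)
    (F G : Set L) (hG : CFilter G)
    (hGF : G ⊆ F) (hBool : FBoolean F G) :
    arrow (arrow G F) F = G :=
  (arrow_subset_of_subset_filterGen C hG hBool.ge).antisymm (subset_arrow_arrow hGF)

theorem stmt17 {L : Type*} [SemilatticeSup L] [OrderTop L] (C : CubicAlgebra L)
    (hMR : C.IsMR) (F G : Set L) (hF : CFilter F) (hG : CFilter G)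
    (hGF : G ⊆ F) (hBool : FBoolean F G) :
    arrow (arrow G F) F = G :=
  stmt17_general C F G hG hGF hBool

end CubicPaper
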